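/- Let (b_j)_{j∈ℕ} be real numbers and (β_j)_{j∈ℕ} positive real numbers such that the series Σ_j b_j²/β_j converges with sum S. Let δ ∈ ℝ, U ≥ 0, and let u : [δ,∞) → ℝ be measurable with |u(s)| ≤ U for almost every s ≥ δ. For t ≥ δ define the real sequence x(t) = ( √(β_j)·b_j·∫_δ^t e^{−β_j(t−s)}·u(s) ds )_{j∈ℕ}. Then for every t ≥ δ the sequence x(t) belongs to ℓ²(ℕ) with ‖x(t)‖_{ℓ²} ≤ U·√S, and the map t ↦ x(t) from [δ,∞) to ℓ²(ℕ) is uniformly continuous; in particular it is bounded and uniformly continuous on [δ,∞). -/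

import Mathlib

/-!
Each coordinate is `√β_j b_j` times the solution `I_j` of `y' = -β_j y + u`, `y(δ) = 0`, so
`|I_j(t)| ≤ U/β_j` and `|I_j(t') - I_j(t)| ≤ 2U(1 - e^{-β_j(t'-t)})/β_j`. Squared, the coordinates
of `x(t)` are dominated by `U² b_j²/β_j`, which gives the `ℓ²` bound, and the increments by
`4U² b_j²/β_j (1 - e^{-β_j h})²`, whose sum tends to `0` as `h ↓ 0` by dominated convergence,
uniformly in `t`.
-/

open MeasureTheory intervalIntegral Filter Topology

/-- The value at time `t` of the solution of `y' = -β y + u`, `y(a) = 0`. -/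
noncomputable def duhamel (β : ℝ) (u : ℝ → ℝ) (a t : ℝ) : ℝ :=
  ∫ s in a..t, Real.exp (-β * (t - s)) * u s

section Duhamel

variable {β δ U : ℝ} {u : ℝ → ℝ}

lemma integral_exp_neg_mul_sub (hβ : β ≠ 0) (a c : ℝ) :
    ∫ s in a..c, Real.exp (-β * (c - s)) = (1 - Real.exp (-β * (c - a))) / β := by
  have hlin : ∀ s, -β * (c - s) = β * s - β * c := fun s => by ring
  simp only [hlin]
  rw [integral_comp_mul_sub (f := Real.exp) hβ, integral_exp, sub_self, Real.exp_zero,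
    smul_eq_mul, inv_mul_eq_div]

lemma one_sub_exp_neg_mul_mem_Icc (hβ : 0 ≤ β) {h : ℝ} (hh : 0 ≤ h) :
    1 - Real.exp (-β * h) ∈ Set.Icc 0 1 := by
  have hexp : Real.exp (-β * h) ≤ 1 := Real.exp_le_one_iff.2 (by nlinarith)
  constructor <;> linarith [Real.exp_pos (-β * h)]

lemma intervalIntegrable_exp_mul (hu : AEStronglyMeasurable u volume)
    (hbdd : ∀ᵐ s, δ ≤ s → |u s| ≤ U) {a c : ℝ} (ha : δ ≤ a) (hc : δ ≤ c) (t : ℝ) :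
    IntervalIntegrable (fun s => Real.exp (-β * (t - s)) * u s) volume a c := by
  refine IntervalIntegrable.continuousOn_mul ?_ (by fun_prop)
  rw [intervalIntegrable_iff]
  refine Measure.integrableOn_of_bounded measure_Ioc_lt_top.ne hu (M := U) ?_
  rw [ae_restrict_iff' measurableSet_uIoc]
  filter_upwards [hbdd] with s hs hmem
  exact hs ((le_min ha hc).trans (Set.uIoc_subset_uIcc hmem).1)

lemma abs_integral_exp_mul_le (hβ : β ≠ 0) (hbdd : ∀ᵐ s, δ ≤ s → |u s| ≤ U)
    {a c : ℝ} (ha : δ ≤ a) (hac : a ≤ c) :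
    |∫ s in a..c, Real.exp (-β * (c - s)) * u s| ≤ U * (1 - Real.exp (-β * (c - a))) / β := by
  have hbound : ∀ᵐ s, s ∈ Set.Ioc a c →
      ‖Real.exp (-β * (c - s)) * u s‖ ≤ U * Real.exp (-β * (c - s)) := by
    filter_upwards [hbdd] with s hs hmem
    rw [norm_mul, Real.norm_of_nonneg (Real.exp_pos _).le, Real.norm_eq_abs, mul_comm]
    exact mul_le_mul_of_nonneg_right (hs (ha.trans hmem.1.le)) (Real.exp_pos _).le
  refine (norm_integral_le_of_norm_le hac hbound
    (Continuous.intervalIntegrable (by fun_prop) _ _)).trans_eq ?_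
  rw [intervalIntegral.integral_const_mul, integral_exp_neg_mul_sub hβ, mul_div_assoc]

lemma abs_duhamel_le (hβ : 0 < β) (hU : 0 ≤ U) (hbdd : ∀ᵐ s, δ ≤ s → |u s| ≤ U)
    {t : ℝ} (ht : δ ≤ t) : |duhamel β u δ t| ≤ U / β := by
  refine (abs_integral_exp_mul_le hβ.ne' hbdd le_rfl ht).trans ?_
  have := (one_sub_exp_neg_mul_mem_Icc hβ.le (sub_nonneg.2 ht)).2
  gcongr
  nlinarith

/-- On `[t, t']` the solution first decays by the factor `e^{-β(t'-t)}` and then picks up the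
contribution of `u` on `[t, t']`; both changes are at most `U/β · (1 - e^{-β(t'-t)})`. -/
lemma abs_duhamel_sub_le (hβ : 0 < β) (hU : 0 ≤ U) (hu : AEStronglyMeasurable u volume)
    (hbdd : ∀ᵐ s, δ ≤ s → |u s| ≤ U) {t t' : ℝ} (ht : δ ≤ t) (htt' : t ≤ t') :
    |duhamel β u δ t' - duhamel β u δ t| ≤
      2 * U * (1 - Real.exp (-β * (t' - t))) / β := by
  set J := ∫ s in t..t', Real.exp (-β * (t' - s)) * u s
  have hsplit : duhamel β u δ t' = Real.exp (-β * (t' - t)) * duhamel β u δ t + J := by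
    rw [duhamel, duhamel, ← integral_add_adjacent_intervals
      (intervalIntegrable_exp_mul hu hbdd le_rfl ht t')
      (intervalIntegrable_exp_mul hu hbdd ht (ht.trans htt') t'),
      ← intervalIntegral.integral_const_mul]
    congr 1
    refine integral_congr fun s _ => ?_
    rw [← mul_assoc, ← Real.exp_add]
    ring_nf
  set I := duhamel β u δ t
  have hI : |I| ≤ U / β := abs_duhamel_le hβ hU hbdd ht
  have hJ : |J| ≤ U * (1 - Real.exp (-β * (t' - t))) / β :=
    abs_integral_exp_mul_le hβ.ne' hbdd ht htt'
  have he := one_sub_exp_neg_mul_mem_Icc hβ.le (sub_nonneg.2 htt')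
  calc |duhamel β u δ t' - I| = |-((1 - Real.exp (-β * (t' - t))) * I) + J| := by
        rw [hsplit]; ring_nf
    _ ≤ (1 - Real.exp (-β * (t' - t))) * |I| + |J| := by
        grw [abs_add_le, abs_neg, abs_mul, abs_of_nonneg he.1]
    _ ≤ (1 - Real.exp (-β * (t' - t))) * (U / β) + U * (1 - Real.exp (-β * (t' - t))) / β := by
        gcongr; exact he.1
    _ = 2 * U * (1 - Real.exp (-β * (t' - t))) / β := by ring

end Duhamel

lemma memℓp_two_of_sq_le {ι : Type*} {E : ι → Type*} [∀ i, NormedAddCommGroup (E i)]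
    {f : ∀ i, E i} {g : ι → ℝ} (hfg : ∀ i, ‖f i‖ ^ 2 ≤ g i) (hg : Summable g) : Memℓp f 2 :=
  memℓp_gen <| by
    simpa using hg.of_nonneg_of_le (fun i => sq_nonneg _) hfg

lemma lp.norm_le_sqrt_tsum_of_sq_le {ι : Type*} {E : ι → Type*} [∀ i, NormedAddCommGroup (E i)]
    {f : lp E 2} {g : ι → ℝ} (hfg : ∀ i, ‖f i‖ ^ 2 ≤ g i) (hg : Summable g) :
    ‖f‖ ≤ √(∑' i, g i) := by
  refine lp.norm_le_of_tsum_le (by norm_num) (Real.sqrt_nonneg _) ?_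
  have hg0 : 0 ≤ ∑' i, g i := tsum_nonneg fun i => (sq_nonneg _).trans (hfg i)
  simpa [Real.sq_sqrt hg0] using
    (hg.of_nonneg_of_le (fun i => sq_nonneg _) hfg).tsum_le_tsum hfg hg

lemma sq_sqrt_mul_mul_le {β b I C : ℝ} (hβ : 0 < β) (hI : |I| ≤ C / β) :
    (√β * b * I) ^ 2 ≤ b ^ 2 / β * C ^ 2 := by
  have hIC : I ^ 2 ≤ (C / β) ^ 2 := sq_le_sq' (abs_le.1 hI).1 (abs_le.1 hI).2
  calc (√β * b * I) ^ 2 = β * b ^ 2 * I ^ 2 := by rw [mul_pow, mul_pow, Real.sq_sqrt hβ.le]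
    _ ≤ β * b ^ 2 * (C / β) ^ 2 := by gcongr
    _ = b ^ 2 / β * C ^ 2 := by field_simp

lemma abs_mul_one_sub_exp_sq_le {c β h : ℝ} (hβ : 0 ≤ β) (hh : 0 ≤ h) :
    |c * (1 - Real.exp (-β * h)) ^ 2| ≤ |c| := by
  have he := one_sub_exp_neg_mul_mem_Icc hβ hh
  rw [abs_mul, abs_of_nonneg (sq_nonneg (1 - Real.exp (-β * h)))]
  exact mul_le_of_le_one_right (abs_nonneg _) (pow_le_one₀ he.1 he.2)

lemma tendsto_tsum_mul_one_sub_exp_sq {ι : Type*} {c β : ι → ℝ} (hc : Summable c)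
    (hβ : ∀ i, 0 ≤ β i) :
    Tendsto (fun h => ∑' i, c i * (1 - Real.exp (-β i * h)) ^ 2) (𝓝[≥] 0) (𝓝 0) := by
  have hterm : ∀ i, Tendsto (fun h => c i * (1 - Real.exp (-β i * h)) ^ 2) (𝓝[≥] 0) (𝓝 0) :=
    fun i => tendsto_nhdsWithin_of_tendsto_nhds <| by
      simpa using (by fun_prop : Continuous fun h => c i * (1 - Real.exp (-β i * h)) ^ 2).tendsto 0
  have hbound : ∀ᶠ h in 𝓝[≥] (0 : ℝ), ∀ i, ‖c i * (1 - Real.exp (-β i * h)) ^ 2‖ ≤ |c i| := by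
    filter_upwards [self_mem_nhdsWithin] with h hh i
    exact abs_mul_one_sub_exp_sq_le (hβ i) hh
  simpa using tendsto_tsum_of_dominated_convergence hc.abs hterm hbound

lemma uniformContinuousOn_of_dist_le {X : Type*} [PseudoMetricSpace X] {f : ℝ → X}
    {s : Set ℝ} (ω : ℝ → ℝ) (hω : Tendsto ω (𝓝[≥] 0) (𝓝 0))
    (hf : ∀ a ∈ s, ∀ b ∈ s, a ≤ b → dist (f a) (f b) ≤ ω (b - a)) :
    UniformContinuousOn f s := by
  rw [Metric.uniformContinuousOn_iff]
  intro ε hε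
  obtain ⟨η, hη, hωη⟩ := Metric.mem_nhdsWithin_iff.1 (hω (gt_mem_nhds hε))
  have hsmall : ∀ a ∈ s, ∀ b ∈ s, a ≤ b → dist a b < η → dist (f a) (f b) < ε := by
    intro a ha b hb hab hdist
    refine (hf a ha b hb hab).trans_lt (hωη ⟨?_, sub_nonneg.2 hab⟩)
    rwa [Metric.mem_ball, dist_zero_right, Real.norm_eq_abs, abs_sub_comm, ← Real.dist_eq]
  refine ⟨η, hη, fun a ha b hb hdist => ?_⟩
  rcases le_total a b with hab | hba
  · exact hsmall a ha b hb hab hdist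
  · rw [dist_comm] at hdist ⊢
    exact hsmall b hb a ha hba hdist

/-- The spectral representation `x(t) = (√β_j b_j ∫_δ^t e^{−β_j(t−s)}u(s)ds)_j`
defines, for `t ≥ δ`, an element of `ℓ²(ℕ)` of norm at most `U√S`, and the map
`t ↦ x(t)` is (bounded and) uniformly continuous on `[δ,∞)`. -/
theorem mild_solution_BUC_ell2 (b β : ℕ → ℝ) (hβ : ∀ j, 0 < β j) (S : ℝ)
    (hsum : HasSum (fun j => b j ^ 2 / β j) S)
    (δ U : ℝ) (hU : 0 ≤ U) (u : ℝ → ℝ) (hu : Measurable u)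
    (hbdd : ∀ᵐ s : ℝ, δ ≤ s → |u s| ≤ U) :
    ∃ x : ℝ → lp (fun _ : ℕ => ℝ) 2,
      (∀ t, δ ≤ t → ∀ j : ℕ,
        (x t : ∀ _ : ℕ, ℝ) j =
          Real.sqrt (β j) * b j * ∫ s in δ..t, Real.exp (-β j * (t - s)) * u s) ∧
      (∀ t, δ ≤ t → ‖x t‖ ≤ U * Real.sqrt S) ∧
      UniformContinuousOn x (Set.Ici δ) := by
  have hc : Summable fun j => b j ^ 2 / β j := hsum.summable
  -- `max δ t` only serves to extend `x` to `t < δ`, where nothing is claimed.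
  set F : ℝ → ℕ → ℝ := fun t j => √(β j) * b j * duhamel (β j) u δ (max δ t)
  have hF : ∀ t j, ‖F t j‖ ^ 2 ≤ b j ^ 2 / β j * U ^ 2 := fun t j => by
    rw [Real.norm_eq_abs, sq_abs]
    exact sq_sqrt_mul_mul_le (hβ j) (abs_duhamel_le (hβ j) hU hbdd (le_max_left δ t))
  let x : ℝ → lp (fun _ : ℕ => ℝ) 2 := fun t =>
    ⟨F t, memℓp_two_of_sq_le (hF t) (hc.mul_right _)⟩
  refine ⟨x, fun t ht j => by simp [x, F, duhamel, max_eq_right ht], fun t _ => ?_, ?_⟩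
  · calc ‖x t‖ ≤ √(∑' j, b j ^ 2 / β j * U ^ 2) :=
          lp.norm_le_sqrt_tsum_of_sq_le (hF t) (hc.mul_right _)
      _ = U * √S := by
          rw [tsum_mul_right, hsum.tsum_eq, Real.sqrt_mul' _ (sq_nonneg U), Real.sqrt_sq hU,
            mul_comm]
  set c : ℕ → ℝ := fun j => b j ^ 2 / β j * (2 * U) ^ 2
  have hω : Tendsto (fun h => √(∑' j, c j * (1 - Real.exp (-β j * h)) ^ 2)) (𝓝[≥] 0) (𝓝 0) := by
    simpa only [Real.sqrt_zero, Function.comp_def] using (Real.continuous_sqrt.tendsto 0).comp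
      (tendsto_tsum_mul_one_sub_exp_sq (c := c) (hc.mul_right _) fun j => (hβ j).le)
  refine uniformContinuousOn_of_dist_le _ hω fun t (ht : δ ≤ t) t' _ htt' => ?_
  have hdiff : ∀ j, ‖(x t' - x t) j‖ ^ 2 ≤ c j * (1 - Real.exp (-β j * (t' - t))) ^ 2 :=
    fun j => by
      have hD := abs_duhamel_sub_le (hβ j) hU hu.aestronglyMeasurable hbdd ht htt'
      rw [lp.coeFn_sub, Pi.sub_apply, Real.norm_eq_abs, sq_abs]
      simp only [x, F, max_eq_right ht, max_eq_right (ht.trans htt'), ← mul_sub]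
      exact (sq_sqrt_mul_mul_le (hβ j) hD).trans_eq (by ring)
  rw [dist_comm, dist_eq_norm]
  exact lp.norm_le_sqrt_tsum_of_sq_le hdiff <| (hc.mul_right _).abs.of_norm_bounded
    fun j => abs_mul_one_sub_exp_sq_le (hβ j).le (sub_nonneg.2 htt')
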